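/- Let G be a semi-Markovian causal graph with observed variables V, let 𝔸 be a finite collection of subsets of V, let S ⊆ V, and let S₁, …, S_l be the c-components of S. Then Q[S] is g-identifiable from (𝔸, G) if and only if Q[S_i] is g-identifiable from (𝔸, G) for every i ∈ [1:l]. -/

import Mathlib

open scoped Classical

/-- A semi-Markovian causal graph: a DAG over a finite vertex set partitioned into
observed (`obs`) and unobserved (`unobs`) variables, where every unobserved variable
has no parents and exactly two (distinct, observed) children. -/
structure CausalGraph (ν : Type) [Fintype ν] [DecidableEq ν] where
  obs : Finset ν
  unobs : Finset ν
  disj : Disjoint obs unobs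
  E : ν → ν → Prop
  edge_mem : ∀ x y, E x y → x ∈ obs ∪ unobs ∧ y ∈ obs ∪ unobs
  acyclic : ∀ x, ¬ Relation.TransGen E x x
  unobs_no_parent : ∀ u ∈ unobs, ∀ w, ¬ E w u
  unobs_two_children : ∀ u ∈ unobs,
    ∃ a b, a ≠ b ∧ a ∈ obs ∧ b ∈ obs ∧ (∀ w, E u w ↔ w = a ∨ w = b)

namespace CausalGraph

variable {ν : Type} [Fintype ν] [DecidableEq ν]

def verts (G : CausalGraph ν) : Finset ν := G.obs ∪ G.unobs

/-- A structural equation model over the causal graph `G`: finite nonempty domains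
(encoded as finite sets of naturals), a pmf for each unobserved variable, and a
conditional pmf (given an assignment to the parents) for each observed variable. -/
structure SEM (G : CausalGraph ν) where
  dom : ν → Finset ℕ
  dom_ne : ∀ x, (dom x).Nonempty
  pU : ν → ℕ → ℝ
  pU_nonneg : ∀ u n, 0 ≤ pU u n
  pU_sum : ∀ u ∈ G.unobs, ∑ n ∈ dom u, pU u n = 1
  pO : ν → ℕ → (ν → ℕ) → ℝ
  pO_nonneg : ∀ x n pa, 0 ≤ pO x n pa
  pO_sum : ∀ x ∈ G.obs, ∀ pa : ν → ℕ, ∑ n ∈ dom x, pO x n pa = 1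
  pO_par : ∀ x n (pa pa' : ν → ℕ), (∀ p, G.E p x → pa p = pa' p) → pO x n pa = pO x n pa'

namespace SEM

variable {G : CausalGraph ν}

/-- Full assignments: all variables of `G` get values in their domains
(non-vertices are pinned to `0`). -/
noncomputable def fullAssign (M : SEM G) : Finset (ν → ℕ) :=
  Fintype.piFinset (fun x => if x ∈ G.verts then M.dom x else {0})

/-- Observed assignments `dom(V)`: observed variables get values in their domains
(all other coordinates are pinned to `0`). -/
noncomputable def obsAssign (M : SEM G) : Finset (ν → ℕ) :=
  Fintype.piFinset (fun x => if x ∈ G.obs then M.dom x else {0})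

/-- `Q^M[S](v) = Σ_u Π_{X ∈ S} P(x | pa_G(X)) Π_{U} P(u)`. -/
noncomputable def Q (M : SEM G) (S : Finset ν) (v : ν → ℕ) : ℝ :=
  ∑ w ∈ M.fullAssign.filter (fun w => ∀ x ∈ G.obs, w x = v x),
    (∏ x ∈ S, M.pO x (w x) w) * ∏ u ∈ G.unobs, M.pU u (w u)

/-- The observational distribution `P^M(v) = Q^M[V](v)`. -/
noncomputable def P (M : SEM G) (v : ν → ℕ) : ℝ := M.Q G.obs v

/-- Post-interventional probability `P^M_x(y)`: sum of `Q^M[V∖X]` over all observed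
realizations consistent with `x` on `X` and `y` on `Y`. -/
noncomputable def Px (M : SEM G) (X : Finset ν) (x : ν → ℕ) (Y : Finset ν) (y : ν → ℕ) : ℝ :=
  ∑ v ∈ M.obsAssign.filter (fun v => (∀ i ∈ X, v i = x i) ∧ (∀ i ∈ Y, v i = y i)),
    M.Q (G.obs \ X) v

/-- `M ∈ 𝕄⁺(G)`: strictly positive observational distribution. -/
def positive (M : SEM G) : Prop := ∀ v ∈ M.obsAssign, 0 < M.P v

end SEM

/-- The causal effect of `X` on `Y` is identifiable from `G`. -/
def Identifiable (G : CausalGraph ν) (X Y : Finset ν) : Prop :=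
  ∀ M₁ M₂ : SEM G, M₁.positive → M₂.positive →
    (∀ i ∈ G.obs, M₁.dom i = M₂.dom i) →
    (∀ v ∈ M₁.obsAssign, M₁.P v = M₂.P v) →
    ∀ x y : ν → ℕ, (∀ i ∈ X, x i ∈ M₁.dom i) → (∀ i ∈ Y, y i ∈ M₁.dom i) →
      M₁.Px X x Y y = M₂.Px X x Y y

/-- `Q[S]` is identifiable from `G`. -/
def QIdentifiable (G : CausalGraph ν) (S : Finset ν) : Prop :=
  Identifiable G (G.obs \ S) S

/-- The causal effect of `X` on `Y` is g-identifiable from `(𝔸, G)`. -/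
def GIdentifiable (G : CausalGraph ν) (𝔸 : Finset (Finset ν)) (X Y : Finset ν) : Prop :=
  ∀ M₁ M₂ : SEM G, M₁.positive → M₂.positive →
    (∀ i ∈ G.obs, M₁.dom i = M₂.dom i) →
    (∀ A ∈ 𝔸, ∀ v ∈ M₁.obsAssign, M₁.Q A v = M₂.Q A v) →
    ∀ x y : ν → ℕ, (∀ i ∈ X, x i ∈ M₁.dom i) → (∀ i ∈ Y, y i ∈ M₁.dom i) →
      M₁.Px X x Y y = M₂.Px X x Y y

/-- `Q[S]` is g-identifiable from `(𝔸, G)`. -/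
def QGIdentifiable (G : CausalGraph ν) (𝔸 : Finset (Finset ν)) (S : Finset ν) : Prop :=
  GIdentifiable G 𝔸 (G.obs \ S) S

/-- Bidirected edge of `G_X` between `a` and `b`: distinct members of `X` sharing an
unobserved parent (whose two children then necessarily both lie in `X`). -/
def biEdge (G : CausalGraph ν) (X : Finset ν) (a b : ν) : Prop :=
  a ≠ b ∧ a ∈ X ∧ b ∈ X ∧ ∃ u ∈ G.unobs, G.E u a ∧ G.E u b

/-- `X` is a single c-component of `G`. -/
def SingleC (G : CausalGraph ν) (X : Finset ν) : Prop :=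
  X.Nonempty ∧ ∀ a ∈ X, ∀ b ∈ X, Relation.ReflTransGen (G.biEdge X) a b

/-- The c-components of `S`: connected components of the bidirected part of `G_S`. -/
noncomputable def cComponents (G : CausalGraph ν) (S : Finset ν) : Finset (Finset ν) :=
  S.image (fun a => S.filter (fun b => Relation.ReflTransGen (G.biEdge S) a b))

/-- Directed edge of `G_X` (both endpoints in `X`). -/
def dirEdgeIn (G : CausalGraph ν) (X : Finset ν) (a b : ν) : Prop :=
  a ∈ X ∧ b ∈ X ∧ G.E a b

/-- `Anc_Y(G_X)`: members of `X` having a directed path in `G_X` to some member of `Y`. -/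
noncomputable def ancIn (G : CausalGraph ν) (X Y : Finset ν) : Finset ν :=
  X.filter (fun a => ∃ y ∈ Y, Relation.ReflTransGen (G.dirEdgeIn X) a y)

/-- Unobserved vertices of the induced subgraph `G[A]`: unobserved vertices of `G`
both of whose children lie in `A`. -/
noncomputable def inducedUnobs (G : CausalGraph ν) (A : Finset ν) : Finset ν :=
  G.unobs.filter (fun u => ∀ w, G.E u w → w ∈ A)

/-- The induced subgraph `G[A]`. -/
noncomputable def induced (G : CausalGraph ν) (A : Finset ν) : CausalGraph ν where
  obs := A ∩ G.obs
  unobs := G.inducedUnobs A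
  disj := G.disj.mono Finset.inter_subset_right (Finset.filter_subset _ _)
  E x y := G.E x y ∧ x ∈ (A ∩ G.obs) ∪ G.inducedUnobs A ∧ y ∈ (A ∩ G.obs) ∪ G.inducedUnobs A
  edge_mem := fun x y h => ⟨h.2.1, h.2.2⟩
  acyclic := fun x h => G.acyclic x (h.lift id (fun a b (hab : G.E a b ∧ _) => hab.1))
  unobs_no_parent := fun u hu w hw =>
    G.unobs_no_parent u (Finset.mem_filter.mp hu).1 w hw.1
  unobs_two_children := by
    intro u hu
    have hu' := Finset.mem_filter.mp hu
    obtain ⟨a, b, hab, ha, hb, hiff⟩ := G.unobs_two_children u hu'.1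
    have hEa : G.E u a := (hiff a).mpr (Or.inl rfl)
    have hEb : G.E u b := (hiff b).mpr (Or.inr rfl)
    have haA : a ∈ A := hu'.2 a hEa
    have hbA : b ∈ A := hu'.2 b hEb
    refine ⟨a, b, hab, Finset.mem_inter.mpr ⟨haA, ha⟩, Finset.mem_inter.mpr ⟨hbA, hb⟩, ?_⟩
    intro w
    constructor
    · intro hw; exact (hiff w).mp hw.1
    · rintro (rfl | rfl)
      · exact ⟨hEa, Finset.mem_union.mpr (Or.inr hu),
          Finset.mem_union.mpr (Or.inl (Finset.mem_inter.mpr ⟨haA, ha⟩))⟩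
      · exact ⟨hEb, Finset.mem_union.mpr (Or.inr hu),
          Finset.mem_union.mpr (Or.inl (Finset.mem_inter.mpr ⟨hbA, hb⟩))⟩

/-- `H` is a subgraph of `G`. -/
def IsSubgraph (H G : CausalGraph ν) : Prop :=
  H.obs ⊆ G.obs ∧ H.unobs ⊆ G.unobs ∧ ∀ a b, H.E a b → G.E a b

/-- `H` is an `R`-rooted c-forest: `R` is the root set of `H`, the observed vertex set of
`H` is a single c-component, and every observed vertex has at most one child in `H`. -/
def IsCForest (H : CausalGraph ν) (R : Finset ν) : Prop :=
  H.obs.filter (fun x => ∀ w, ¬ H.E x w) = R ∧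
  H.SingleC H.obs ∧
  ∀ x ∈ H.obs, ∀ w w', H.E x w → H.E x w' → w = w'

end CausalGraph

/-!
Write `Q[S](v)` as the expectation, over the independent unobserved variables, of
`∏_{x ∈ S} P(x | pa(x))`. The factor of a c-component `T` of `S` only sees the unobserved
parents of `T`, and distinct c-components have disjoint sets of unobserved parents, so
`Q[S] = ∏_T Q[T]`; this gives one direction. Conversely, summing `Q[S]` over the values of a
sink `s` of `S` gives `Q[S ∖ {s}]`, whose c-components include every c-component of `S` avoiding
`s`; by induction these are determined by `Q[S]`, and the c-component containing `s` is then
`Q[S]` divided by the product of the others, which is positive in a positive model.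
-/

open Finset

theorem sum_mul_sum_piFinset_of_dependsOn {ι α R : Type*} [Fintype ι] [DecidableEq ι]
    [CommSemiring R] (D : ι → Finset α) (U B : Finset ι) (p : ι → α → R)
    {f g : (ι → α) → R} (hf : DependsOn f B) (hg : DependsOn g (↑B)ᶜ) :
    (∑ a ∈ Fintype.piFinset D, f a * ∏ i ∈ U, p i (a i))
        * ∑ b ∈ Fintype.piFinset D, g b * ∏ i ∈ U, p i (b i)
      = (∑ a ∈ Fintype.piFinset D, f a * g a * ∏ i ∈ U, p i (a i))
        * ∑ b ∈ Fintype.piFinset D, ∏ i ∈ U, p i (b i) := by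
  set ρ : (ι → α) → R := fun a => ∏ i ∈ U, p i (a i)
  -- Swapping the coordinates of `a` and `b` outside `B` is an involution preserving `ρ a * ρ b`.
  set σ : (ι → α) × (ι → α) → (ι → α) × (ι → α) :=
    fun ab => (B.piecewise ab.1 ab.2, B.piecewise ab.2 ab.1)
  have hσσ : ∀ ab, σ (σ ab) = ab := fun ab => by
    ext i <;> by_cases hi : i ∈ B <;> simp [σ, hi]
  have hσ : ∀ ab ∈ Fintype.piFinset D ×ˢ Fintype.piFinset D,
      σ ab ∈ Fintype.piFinset D ×ˢ Fintype.piFinset D := fun ab hab => by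
    simp only [mem_product, Fintype.mem_piFinset] at hab ⊢
    exact ⟨fun i => by by_cases hi : i ∈ B <;> simp [σ, hi, hab.1 i, hab.2 i],
      fun i => by by_cases hi : i ∈ B <;> simp [σ, hi, hab.1 i, hab.2 i]⟩
  have hρ : ∀ a b, ρ a * ρ b = ρ (B.piecewise a b) * ρ (B.piecewise b a) := fun a b => by
    simp only [ρ, ← prod_mul_distrib]
    exact prod_congr rfl fun i _ => by by_cases hi : i ∈ B <;> simp [hi, mul_comm]
  rw [sum_mul_sum, sum_mul_sum, ← sum_product', ← sum_product']
  refine sum_nbij' σ σ hσ hσ (fun ab _ => hσσ ab) (fun ab _ => hσσ ab)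
    fun ⟨a, b⟩ _ => ?_
  have hfa : f a = f (B.piecewise a b) :=
    hf fun i hi => (B.piecewise_eq_of_mem _ _ (mem_coe.1 hi)).symm
  have hgb : g b = g (B.piecewise a b) :=
    hg fun i hi => (B.piecewise_eq_of_notMem _ _ (by simpa using hi)).symm
  rw [hfa, hgb, mul_mul_mul_comm, hρ a b, ← mul_assoc]

namespace CausalGraph

variable {ν : Type} [Fintype ν] [DecidableEq ν] {G : CausalGraph ν}

theorem not_E_self (x : ν) : ¬ G.E x x := fun h => G.acyclic x (.single h)

theorem notMem_unobs_of_mem_obs {x : ν} (hx : x ∈ G.obs) : x ∉ G.unobs :=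
  disjoint_left.mp G.disj hx

theorem exists_sink {S : Finset ν} (hS : S.Nonempty) : ∃ s ∈ S, ∀ y ∈ S, ¬ G.E s y := by
  have : IsStrictOrder ν (flip (Relation.TransGen G.E)) :=
    { irrefl := G.acyclic, trans := fun _ _ _ hab hbc => hbc.trans hab }
  obtain ⟨s, hs, hmin⟩ :=
    (Finite.wellFounded_of_trans_of_irrefl (flip (Relation.TransGen G.E))).has_min S hS
  exact ⟨s, hs, fun y hy hsy => hmin y hy (.single hsy)⟩

section CComponents

variable {S S' T T' : Finset ν} {a b : ν}

theorem biEdge_symm (h : G.biEdge S a b) : G.biEdge S b a :=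
  let ⟨hab, ha, hb, u, hu, hua, hub⟩ := h
  ⟨hab.symm, hb, ha, u, hu, hub, hua⟩

theorem biEdge_mono (h : S' ⊆ S) (hab : G.biEdge S' a b) : G.biEdge S a b :=
  ⟨hab.1, h hab.2.1, h hab.2.2.1, hab.2.2.2⟩

instance : Std.Symm (G.biEdge S) := ⟨fun _ _ => biEdge_symm⟩

theorem filter_reflTransGen_biEdge_eq (h : Relation.ReflTransGen (G.biEdge S) a b) :
    S.filter (Relation.ReflTransGen (G.biEdge S) a)
      = S.filter (Relation.ReflTransGen (G.biEdge S) b) :=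
  filter_congr fun _ _ => ⟨(symm h).trans, h.trans⟩

theorem subset_of_mem_cComponents (hT : T ∈ G.cComponents S) : T ⊆ S := by
  obtain ⟨a, -, rfl⟩ := mem_image.mp hT
  exact filter_subset _ _

theorem nonempty_of_mem_cComponents (hT : T ∈ G.cComponents S) : S.Nonempty :=
  let ⟨a, ha, _⟩ := mem_image.mp hT
  ⟨a, ha⟩

theorem eq_of_mem_cComponents (hT : T ∈ G.cComponents S) (hT' : T' ∈ G.cComponents S)
    (ha : a ∈ T) (hb : b ∈ T') (hab : Relation.ReflTransGen (G.biEdge S) a b) : T = T' := by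
  obtain ⟨c, -, rfl⟩ := mem_image.mp hT
  obtain ⟨c', -, rfl⟩ := mem_image.mp hT'
  rw [filter_reflTransGen_biEdge_eq (mem_filter.mp ha).2, filter_reflTransGen_biEdge_eq hab,
    ← filter_reflTransGen_biEdge_eq (mem_filter.mp hb).2]

theorem pairwiseDisjoint_cComponents :
    (G.cComponents S : Set (Finset ν)).PairwiseDisjoint id := fun _ hT _ hT' hne =>
  disjoint_left.mpr fun _ ha ha' => hne (eq_of_mem_cComponents hT hT' ha ha' .refl)

theorem biUnion_cComponents : (G.cComponents S).biUnion id = S := by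
  refine Subset.antisymm (biUnion_subset.mpr fun _ => subset_of_mem_cComponents) fun a ha => ?_
  exact mem_biUnion.mpr ⟨_, mem_image_of_mem _ ha, mem_filter.mpr ⟨ha, .refl⟩⟩

theorem mem_cComponents_of_subset (hT : T ∈ G.cComponents S) (hTS' : T ⊆ S')
    (hS'S : S' ⊆ S) : T ∈ G.cComponents S' := by
  obtain ⟨a, ha, rfl⟩ := mem_image.mp hT
  have hpath : ∀ b, Relation.ReflTransGen (G.biEdge S) a b →
      Relation.ReflTransGen (G.biEdge S') a b := fun b hab => by
    induction hab with
    | refl => exact .refl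
    | @tail c b hac hcb ih =>
      exact ih.tail ⟨hcb.1, hTS' (mem_filter.mpr ⟨hcb.2.1, hac⟩),
        hTS' (mem_filter.mpr ⟨hcb.2.2.1, hac.tail hcb⟩), hcb.2.2.2⟩
  refine mem_image.mpr ⟨a, hTS' (mem_filter.mpr ⟨ha, .refl⟩), ?_⟩
  ext b
  simp only [mem_filter]
  exact ⟨fun ⟨hb, hab⟩ =>
      ⟨hS'S hb, Relation.ReflTransGen.mono (fun _ _ => biEdge_mono hS'S) _ _ hab⟩,
    fun ⟨hb, hab⟩ => ⟨hTS' (mem_filter.mpr ⟨hb, hab⟩), hpath b hab⟩⟩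

end CComponents

noncomputable def latentParents (G : CausalGraph ν) (T : Finset ν) : Finset ν :=
  G.unobs.filter fun u => ∃ x ∈ T, G.E u x

theorem disjoint_latentParents {S T T' : Finset ν} (hT : T ∈ G.cComponents S)
    (hT' : T' ∈ G.cComponents S) (hne : T ≠ T') :
    Disjoint (G.latentParents T) (G.latentParents T') := by
  refine disjoint_left.mpr fun u hu hu' => hne ?_
  obtain ⟨hu, x, hx, hux⟩ := mem_filter.mp hu
  obtain ⟨-, y, hy, huy⟩ := mem_filter.mp hu'
  refine eq_of_mem_cComponents hT hT' hx hy ?_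
  by_cases hxy : x = y
  · exact hxy ▸ .refl
  · exact .single ⟨hxy, subset_of_mem_cComponents hT hx, subset_of_mem_cComponents hT' hy,
      u, hu, hux, huy⟩

end CausalGraph

namespace CausalGraph.SEM

variable {ν : Type} [Fintype ν] [DecidableEq ν] {G : CausalGraph ν} (M : SEM G)

theorem mem_obsAssign {v : ν → ℕ} :
    v ∈ M.obsAssign ↔ (∀ x ∈ G.obs, v x ∈ M.dom x) ∧ ∀ x ∉ G.obs, v x = 0 := by
  simp only [obsAssign, Fintype.mem_piFinset]
  refine ⟨fun h => ⟨fun x hx => ?_, fun x hx => ?_⟩, fun h x => ?_⟩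
  · simpa [hx] using h x
  · simpa [hx] using h x
  · by_cases hx : x ∈ G.obs <;> simp [hx, h.1, h.2]

theorem obsAssign_congr {M₁ M₂ : SEM G} (hdom : ∀ i ∈ G.obs, M₁.dom i = M₂.dom i) :
    M₁.obsAssign = M₂.obsAssign := by
  ext v
  simp +contextual only [mem_obsAssign, hdom]

theorem update_mem_obsAssign {v : ν → ℕ} (hv : v ∈ M.obsAssign) {s : ν} (hs : s ∈ G.obs)
    {n : ℕ} (hn : n ∈ M.dom s) : Function.update v s n ∈ M.obsAssign := by
  rw [mem_obsAssign] at hv ⊢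
  constructor <;> intro x hx <;> by_cases hxs : x = s
  · subst hxs; simpa using hn
  · simpa [hxs] using hv.1 x hx
  · exact absurd (hxs ▸ hs) hx
  · simpa [hxs] using hv.2 x hx

theorem pO_le_one {x : ν} (hx : x ∈ G.obs) {n : ℕ} (hn : n ∈ M.dom x) (pa : ν → ℕ) :
    M.pO x n pa ≤ 1 :=
  M.pO_sum x hx pa ▸ single_le_sum (fun m _ => M.pO_nonneg x m pa) hn

theorem pO_update_of_not_E {s x : ν} (h : ¬ G.E s x) (n m : ℕ) (w : ν → ℕ) :
    M.pO x n (Function.update w s m) = M.pO x n w :=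
  M.pO_par x n _ _ fun p hp => Function.update_of_ne (by rintro rfl; exact h hp) _ _

noncomputable def unobsAssign : Finset (ν → ℕ) :=
  Fintype.piFinset fun x => if x ∈ G.unobs then M.dom x else {0}

noncomputable def latentMean (f : (ν → ℕ) → ℝ) : ℝ :=
  ∑ u ∈ M.unobsAssign, f u * ∏ x ∈ G.unobs, M.pU x (u x)

theorem sum_prod_pU_eq_one : ∑ u ∈ M.unobsAssign, ∏ x ∈ G.unobs, M.pU x (u x) = 1 := by
  have hterm : ∀ u : ν → ℕ, ∏ x, (if x ∈ G.unobs then M.pU x (u x) else 1)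
      = ∏ x ∈ G.unobs, M.pU x (u x) := fun u => by rw [prod_ite_mem, univ_inter]
  have hnorm : ∀ x, ∑ n ∈ (if x ∈ G.unobs then M.dom x else {0}),
      (if x ∈ G.unobs then M.pU x n else 1) = 1 := fun x => by
    split_ifs with hx
    exacts [M.pU_sum x hx, sum_singleton _ _]
  simp only [unobsAssign, ← hterm]
  exact (prod_univ_sum _ fun x n => if x ∈ G.unobs then M.pU x n else 1).symm.trans
    (prod_eq_one fun x _ => hnorm x)

theorem latentMean_mono {f g : (ν → ℕ) → ℝ} (h : ∀ u ∈ M.unobsAssign, f u ≤ g u) :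
    M.latentMean f ≤ M.latentMean g :=
  sum_le_sum fun u hu =>
    mul_le_mul_of_nonneg_right (h u hu) (prod_nonneg fun x _ => M.pU_nonneg x _)

theorem sum_latentMean {κ : Type*} (N : Finset κ) (f : κ → (ν → ℕ) → ℝ) :
    ∑ n ∈ N, M.latentMean (f n) = M.latentMean fun u => ∑ n ∈ N, f n u := by
  simp only [latentMean, sum_mul]
  exact sum_comm

theorem latentMean_mul_of_dependsOn {f g : (ν → ℕ) → ℝ} {B : Finset ν}
    (hf : DependsOn f B) (hg : DependsOn g (↑B)ᶜ) :
    M.latentMean (fun u => f u * g u) = M.latentMean f * M.latentMean g := by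
  have h := sum_mul_sum_piFinset_of_dependsOn
    (fun x => if x ∈ G.unobs then M.dom x else {0}) G.unobs B M.pU hf hg
  rw [← unobsAssign, sum_prod_pU_eq_one, mul_one] at h
  exact h.symm

theorem latentMean_prod_of_dependsOn {κ : Type*} [DecidableEq κ] (K : Finset κ)
    (B : κ → Finset ν) (hB : (K : Set κ).PairwiseDisjoint B) (f : κ → (ν → ℕ) → ℝ)
    (hf : ∀ i ∈ K, DependsOn (f i) (B i)) :
    M.latentMean (fun u => ∏ i ∈ K, f i u) = ∏ i ∈ K, M.latentMean (f i) := by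
  induction K using Finset.induction_on with
  | empty => simpa [latentMean] using M.sum_prod_pU_eq_one
  | @insert i K hi ih =>
    have hrest : DependsOn (fun u => ∏ j ∈ K, f j u) (↑(B i))ᶜ := fun u u' h =>
      prod_congr rfl fun j hj => hf j (mem_insert_of_mem hj) fun x hx => h x fun hxi =>
        disjoint_left.mp (hB (mem_insert_self i K) (mem_insert_of_mem hj)
          (by rintro rfl; exact hi hj)) hxi hx
    simp only [prod_insert hi]
    rw [M.latentMean_mul_of_dependsOn (hf i (mem_insert_self i K)) hrest,
      ih (hB.subset (by simp)) fun j hj => hf j (mem_insert_of_mem hj)]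


-- The full assignments extending `v` are the `G.unobs.piecewise u v` with `u ∈ M.unobsAssign`.
theorem Q_eq_latentMean {T : Finset ν} (hT : T ⊆ G.obs) {v : ν → ℕ}
    (hv : v ∈ M.obsAssign) :
    M.Q T v = M.latentMean fun u => ∏ x ∈ T, M.pO x (v x) (G.unobs.piecewise u v) := by
  rw [mem_obsAssign] at hv
  symm
  refine sum_nbij' (fun u => G.unobs.piecewise u v) (fun w => G.unobs.piecewise w 0)
    (fun u hu => ?_) (fun w hw => ?_) (fun u hu => ?_) (fun w hw => ?_) (fun u hu => ?_)
  all_goals simp only [unobsAssign, fullAssign, verts, mem_filter, Fintype.mem_piFinset] at *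
  · refine ⟨fun x => ?_, fun x hx => ?_⟩
    · have := hu x; have := hv.1 x; have := hv.2 x
      by_cases hxu : x ∈ G.unobs <;> by_cases hxo : x ∈ G.obs <;> simp_all
    · simp [notMem_unobs_of_mem_obs hx]
  · intro x; have := hw.1 x; by_cases hxu : x ∈ G.unobs <;> simp_all
  · funext x; have := hu x; by_cases hxu : x ∈ G.unobs <;> simp_all
  · funext x; have := hw.1 x; have := hw.2 x; have := hv.2 x
    by_cases hxu : x ∈ G.unobs <;> by_cases hxo : x ∈ G.obs <;> simp_all
  · congr 1
    · exact prod_congr rfl fun x hx => by simp [notMem_unobs_of_mem_obs (hT hx)]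
    · exact prod_congr rfl fun x hx => by simp [hx]

theorem sum_Q_update_sink {T : Finset ν} (hT : T ⊆ G.obs) {s : ν} (hs : s ∈ T)
    (hsink : ∀ y ∈ T, ¬ G.E s y) {v : ν → ℕ} (hv : v ∈ M.obsAssign) :
    ∑ n ∈ M.dom s, M.Q T (Function.update v s n) = M.Q (T.erase s) v := by
  rw [M.Q_eq_latentMean ((erase_subset s T).trans hT) hv,
    sum_congr rfl fun n hn => M.Q_eq_latentMean hT (M.update_mem_obsAssign hv (hT hs) hn),
    sum_latentMean]
  congr 1
  funext u
  simp only [← G.unobs.update_piecewise_of_notMem u v (notMem_unobs_of_mem_obs (hT hs))]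
  set J := G.unobs.piecewise u v
  calc ∑ n ∈ M.dom s, ∏ x ∈ T, M.pO x (Function.update v s n x) (Function.update J s n)
      = ∑ n ∈ M.dom s, M.pO s n J * ∏ x ∈ T.erase s, M.pO x (v x) J := by
        refine sum_congr rfl fun n _ => ?_
        rw [← mul_prod_erase T _ hs, Function.update_self, M.pO_update_of_not_E (not_E_self s)]
        congr 1
        refine prod_congr rfl fun x hx => ?_
        rw [Function.update_of_ne (ne_of_mem_erase hx),
          M.pO_update_of_not_E (hsink x (mem_of_mem_erase hx))]
    _ = ∏ x ∈ T.erase s, M.pO x (v x) J := by rw [← sum_mul, M.pO_sum s (hT hs), one_mul]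

theorem Q_pos (hM : M.positive) {T : Finset ν} (hT : T ⊆ G.obs) {v : ν → ℕ}
    (hv : v ∈ M.obsAssign) : 0 < M.Q T v := by
  refine (hM v hv).trans_le ?_
  rw [P, M.Q_eq_latentMean subset_rfl hv, M.Q_eq_latentMean hT hv]
  exact M.latentMean_mono fun u _ => prod_le_prod_of_subset_of_le_one hT
    (fun x _ => M.pO_nonneg x _ _) fun x hx _ => M.pO_le_one hx ((M.mem_obsAssign.mp hv).1 x hx) _

theorem Q_eq_prod_cComponents {S : Finset ν} (hS : S ⊆ G.obs) {v : ν → ℕ}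
    (hv : v ∈ M.obsAssign) : M.Q S v = ∏ T ∈ G.cComponents S, M.Q T v := by
  set φ : ν → (ν → ℕ) → ℝ := fun x u => M.pO x (v x) (G.unobs.piecewise u v)
  have hdep : ∀ T ∈ G.cComponents S,
      DependsOn (fun u => ∏ x ∈ T, φ x u) (G.latentParents T) :=
    fun T _ u u' h => prod_congr rfl fun x hx => M.pO_par _ _ _ _ fun p hp => by
      by_cases hpU : p ∈ G.unobs
      · simp [hpU, h p (mem_coe.mpr (mem_filter.mpr ⟨hpU, x, hx, hp⟩))]
      · simp [hpU]
  have hsplit : ∀ u, ∏ x ∈ S, φ x u = ∏ T ∈ G.cComponents S, ∏ x ∈ T, φ x u := by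
    intro u
    conv_lhs => rw [← biUnion_cComponents (G := G) (S := S)]
    exact prod_biUnion pairwiseDisjoint_cComponents
  calc M.Q S v = M.latentMean fun u => ∏ x ∈ S, φ x u := M.Q_eq_latentMean hS hv
    _ = M.latentMean fun u => ∏ T ∈ G.cComponents S, ∏ x ∈ T, φ x u := by
      simp only [hsplit]
    _ = ∏ T ∈ G.cComponents S, M.latentMean fun u => ∏ x ∈ T, φ x u :=
      M.latentMean_prod_of_dependsOn _ _ (fun T hT T' hT' => disjoint_latentParents hT hT') _ hdep
    _ = ∏ T ∈ G.cComponents S, M.Q T v := prod_congr rfl fun T hT =>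
      (M.Q_eq_latentMean ((subset_of_mem_cComponents hT).trans hS) hv).symm

def QEq (M₁ M₂ : SEM G) (T : Finset ν) : Prop :=
  ∀ v ∈ M₁.obsAssign, M₁.Q T v = M₂.Q T v

theorem Px_sdiff_eq_Q {T : Finset ν} (hT : T ⊆ G.obs) {x y z : ν → ℕ}
    (hz : z ∈ M.obsAssign) (hzx : ∀ i ∈ G.obs \ T, z i = x i) (hzy : ∀ i ∈ T, z i = y i) :
    M.Px (G.obs \ T) x T y = M.Q T z := by
  have hfilter : M.obsAssign.filter
      (fun v => (∀ i ∈ G.obs \ T, v i = x i) ∧ ∀ i ∈ T, v i = y i) = {z} := by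
    ext v
    simp only [mem_filter, mem_singleton]
    refine ⟨fun ⟨hv, hvx, hvy⟩ => funext fun i => ?_, fun hvz => hvz ▸ ⟨hz, hzx, hzy⟩⟩
    by_cases hiT : i ∈ T
    · rw [hvy i hiT, hzy i hiT]
    by_cases hi : i ∈ G.obs
    · rw [hvx i (mem_sdiff.mpr ⟨hi, hiT⟩), hzx i (mem_sdiff.mpr ⟨hi, hiT⟩)]
    · rw [(M.mem_obsAssign.mp hv).2 i hi, (M.mem_obsAssign.mp hz).2 i hi]
  rw [Px, hfilter, sum_singleton, Finset.sdiff_sdiff_eq_self hT]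

section SameDomains

variable {M₁ M₂ : SEM G} (hdom : ∀ i ∈ G.obs, M₁.dom i = M₂.dom i)
include hdom

theorem QEq_of_forall_cComponents {S : Finset ν} (hS : S ⊆ G.obs)
    (h : ∀ T ∈ G.cComponents S, M₁.QEq M₂ T) : M₁.QEq M₂ S := fun v hv => by
  rw [M₁.Q_eq_prod_cComponents hS hv, M₂.Q_eq_prod_cComponents hS (obsAssign_congr hdom ▸ hv)]
  exact prod_congr rfl fun T hT => h T hT v hv

theorem QEq_erase_sink {S : Finset ν} (hS : S ⊆ G.obs) {s : ν} (hs : s ∈ S)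
    (hsink : ∀ y ∈ S, ¬ G.E s y) (hQ : M₁.QEq M₂ S) : M₁.QEq M₂ (S.erase s) := by
  intro v hv
  rw [← M₁.sum_Q_update_sink hS hs hsink hv,
    ← M₂.sum_Q_update_sink hS hs hsink (obsAssign_congr hdom ▸ hv), ← hdom s (hS hs)]
  exact sum_congr rfl fun n hn => hQ _ (M₁.update_mem_obsAssign hv (hS hs) hn)

theorem QEq_of_mem_cComponents (h₂ : M₂.positive) {S : Finset ν} (hS : S ⊆ G.obs)
    (hQ : M₁.QEq M₂ S) {T : Finset ν} (hT : T ∈ G.cComponents S) : M₁.QEq M₂ T := by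
  induction S using Finset.strongInduction generalizing T with
  | H S ih =>
  obtain ⟨s, hs, hsink⟩ := exists_sink (nonempty_of_mem_cComponents hT)
  have hrest : ∀ T' ∈ G.cComponents S, s ∉ T' → M₁.QEq M₂ T' := fun T' hT' hsT' =>
    ih _ (erase_ssubset hs) ((erase_subset s S).trans hS) (QEq_erase_sink hdom hS hs hsink hQ)
      (mem_cComponents_of_subset hT' (subset_erase.mpr ⟨subset_of_mem_cComponents hT', hsT'⟩)
        (erase_subset s S))
  by_cases hsT : s ∈ T
  · intro v hv
    have hv₂ : v ∈ M₂.obsAssign := obsAssign_congr hdom ▸ hv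
    have hothers : ∏ T' ∈ (G.cComponents S).erase T, M₁.Q T' v
        = ∏ T' ∈ (G.cComponents S).erase T, M₂.Q T' v := prod_congr rfl fun T' hT' =>
      hrest T' (mem_of_mem_erase hT') (fun hsT' => ne_of_mem_erase hT'
        (eq_of_mem_cComponents (mem_of_mem_erase hT') hT hsT' hsT .refl)) v hv
    have hpos : 0 < ∏ T' ∈ (G.cComponents S).erase T, M₂.Q T' v := prod_pos fun T' hT' =>
      M₂.Q_pos h₂ ((subset_of_mem_cComponents (mem_of_mem_erase hT')).trans hS) hv₂
    have hQv := hQ v hv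
    rw [M₁.Q_eq_prod_cComponents hS hv, M₂.Q_eq_prod_cComponents hS hv₂,
      ← mul_prod_erase _ _ hT, ← mul_prod_erase _ _ hT, hothers] at hQv
    exact mul_right_cancel₀ hpos.ne' hQv
  · exact hrest T hT hsT

end SameDomains

end CausalGraph.SEM

namespace CausalGraph

variable {ν : Type} [Fintype ν] [DecidableEq ν] {G : CausalGraph ν}

open SEM

theorem qgIdentifiable_iff {𝔸 : Finset (Finset ν)} {T : Finset ν} (hT : T ⊆ G.obs) :
    G.QGIdentifiable 𝔸 T ↔ ∀ M₁ M₂ : SEM G, M₁.positive → M₂.positive →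
      (∀ i ∈ G.obs, M₁.dom i = M₂.dom i) → (∀ A ∈ 𝔸, M₁.QEq M₂ A) →
        M₁.QEq M₂ T := by
  refine forall₂_congr fun M₁ M₂ => forall₄_congr fun _ _ hdom _ =>
    ⟨fun h v hv => ?_, fun h x y hx hy => ?_⟩
  · have hvdom := (M₁.mem_obsAssign.mp hv).1
    rw [← M₁.Px_sdiff_eq_Q hT hv (fun _ _ => rfl) fun _ _ => rfl,
      ← M₂.Px_sdiff_eq_Q hT (obsAssign_congr hdom ▸ hv) (fun _ _ => rfl) fun _ _ => rfl]
    exact h v v (fun i hi => hvdom i (mem_sdiff.mp hi).1) fun i hi => hvdom i (hT hi)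
  · set z := G.obs.piecewise (T.piecewise y x) 0
    have hzx : ∀ i ∈ G.obs \ T, z i = x i := fun i hi => by
      simp [z, (mem_sdiff.mp hi).1, (mem_sdiff.mp hi).2]
    have hzy : ∀ i ∈ T, z i = y i := fun i hi => by simp [z, hT hi, hi]
    have hz : z ∈ M₁.obsAssign := by
      refine M₁.mem_obsAssign.mpr ⟨fun i hi => ?_, fun i hi => by simp [z, hi]⟩
      by_cases hiT : i ∈ T
      · exact hzy i hiT ▸ hy i hiT
      · exact hzx i (mem_sdiff.mpr ⟨hi, hiT⟩) ▸ hx i (mem_sdiff.mpr ⟨hi, hiT⟩)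
    rw [M₁.Px_sdiff_eq_Q hT hz hzx hzy,
      M₂.Px_sdiff_eq_Q hT (obsAssign_congr hdom ▸ hz) hzx hzy]
    exact h z hz

end CausalGraph

open CausalGraph SEM

theorem gid_iff_gid_all_ccomponents_general
    {ν : Type} [Fintype ν] [DecidableEq ν] (G : CausalGraph ν)
    (𝔸 : Finset (Finset ν))
    (S : Finset ν) (hS : S ⊆ G.obs) :
    G.QGIdentifiable 𝔸 S ↔ ∀ T ∈ G.cComponents S, G.QGIdentifiable 𝔸 T := by
  have hTobs : ∀ T ∈ G.cComponents S, T ⊆ G.obs := fun T hT =>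
    (subset_of_mem_cComponents hT).trans hS
  rw [qgIdentifiable_iff hS]
  constructor
  · intro h T hT
    rw [qgIdentifiable_iff (hTobs T hT)]
    exact fun M₁ M₂ h₁ h₂ hdom h𝔸 =>
      QEq_of_mem_cComponents hdom h₂ hS (h M₁ M₂ h₁ h₂ hdom h𝔸) hT
  · intro h M₁ M₂ h₁ h₂ hdom h𝔸
    exact QEq_of_forall_cComponents hdom hS fun T hT =>
      (qgIdentifiable_iff (hTobs T hT)).mp (h T hT) M₁ M₂ h₁ h₂ hdom h𝔸

/-- Proposition 4. `Q[S]` is g-identifiable from `(𝔸, G)` iff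
`Q[Sᵢ]` is g-identifiable from `(𝔸, G)` for every c-component `Sᵢ` of `S`. -/
theorem gid_iff_gid_all_ccomponents
    {ν : Type} [Fintype ν] [DecidableEq ν] (G : CausalGraph ν)
    (𝔸 : Finset (Finset ν)) (h𝔸 : ∀ A ∈ 𝔸, A ⊆ G.obs)
    (S : Finset ν) (hS : S ⊆ G.obs) :
    G.QGIdentifiable 𝔸 S ↔ ∀ T ∈ G.cComponents S, G.QGIdentifiable 𝔸 T :=
  gid_iff_gid_all_ccomponents_general G 𝔸 S hS
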